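/- In an undirected graph with all self-loops, if C is a set of vertices each having an edge to some other vertex, then for any L ∈ N, Σ_{l=1}^{L} ρ_{L-l}(C, V) ≤ 4·ρ_{L-1}(C, V), where ρ_k(C, V) is the number of length-k walks originating from C. -/

import Mathlib

/-- The number of length-`l` walks in the graph `G` whose first vertex lies in
`C` and whose last vertex lies in `T`. -/
noncomputable def walkCount {V : Type*} (G : V → V → Prop) (C T : Set V) (l : ℕ) : ℕ :=
  Nat.card {w : Fin (l + 1) → V //
    (∀ k : Fin l, G (w k.castSucc) (w k.succ)) ∧ w 0 ∈ C ∧ w (Fin.last l) ∈ T}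

/-!
Let `ρ_l` be the number of walks of length `l` starting in `C`. Prepending a self-loop at the
start vertex shows that `ρ_l` is monotone in `l`. Prepending one of two different excursions
`i → i → i` or `i → j → i`, where `j ≠ i` is a neighbour of the start vertex `i`, gives
two disjoint injective images of the length-`l` walks among the length-`(l + 2)` walks, so
`2 ρ_l ≤ ρ_{l+2}`. Hence the sum `ρ_0 + ⋯ + ρ_{L-1}` is dominated by a geometric series
`ρ_{L-1} (1 + 1 + 1/2 + 1/2 + 1/4 + ⋯) ≤ 4 ρ_{L-1}`.
-/

open Finset

lemma Finset.sum_Icc_one_sub_eq_sum_range {M : Type*} [AddCommMonoid M] (f : ℕ → M) (L : ℕ) :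
    ∑ l ∈ Icc 1 L, f (L - l) = ∑ k ∈ range L, f k :=
  sum_nbij' (L - ·) (L - ·) (by simp; omega) (by simp; omega) (by simp; omega)
    (by simp; omega) (by simp)

lemma sum_range_add_two_le_of_two_mul_le {a : ℕ → ℕ} (ha : ∀ n, 2 * a n ≤ a (n + 2))
    (n : ℕ) : ∑ k ∈ range (n + 2), a k ≤ 2 * a (n + 1) + 2 * a n := by
  induction n with
  | zero => simp [sum_range_succ]; omega
  | succ n ih =>
    rw [sum_range_succ]
    change ∑ k ∈ range (n + 2), a k + a (n + 2) ≤ 2 * a (n + 2) + 2 * a (n + 1)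
    have := ha n
    omega

lemma sum_range_succ_le_four_mul_of_monotone {a : ℕ → ℕ} (hmono : Monotone a)
    (ha : ∀ n, 2 * a n ≤ a (n + 2)) (n : ℕ) : ∑ k ∈ range (n + 1), a k ≤ 4 * a n := by
  cases n with
  | zero => simp; omega
  | succ n =>
    calc ∑ k ∈ range (n + 2), a k ≤ 2 * a (n + 1) + 2 * a n :=
          sum_range_add_two_le_of_two_mul_le ha n
      _ ≤ 4 * a (n + 1) := by have := hmono (n.le_add_right 1); omega

section Walks

variable {V : Type*} {G : V → V → Prop} {C T : Set V}

def walkSet (G : V → V → Prop) (C T : Set V) (l : ℕ) : Set (Fin (l + 1) → V) :=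
  {w | (∀ k : Fin l, G (w k.castSucc) (w k.succ)) ∧ w 0 ∈ C ∧ w (Fin.last l) ∈ T}

lemma walkCount_eq_ncard (l : ℕ) : walkCount G C T l = (walkSet G C T l).ncard :=
  (Nat.card_coe_set_eq _).symm

lemma forall_adj_cons {l : ℕ} {w : Fin (l + 1) → V}
    (hw : ∀ k : Fin l, G (w k.castSucc) (w k.succ)) {a : V} (ha : G a (w 0)) :
    ∀ k : Fin (l + 1), G ((Fin.cons a w : Fin (l + 2) → V) k.castSucc)
      ((Fin.cons a w : Fin (l + 2) → V) k.succ) := by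
  refine Fin.cases (by simpa using ha) fun k => ?_
  simpa [← Fin.succ_castSucc] using hw k

lemma cons_mem_walkSet {D : Set V} {l : ℕ} {w : Fin (l + 1) → V} (hw : w ∈ walkSet G D T l)
    {a : V} (haC : a ∈ C) (ha : G a (w 0)) :
    (Fin.cons a w : Fin (l + 2) → V) ∈ walkSet G C T (l + 1) :=
  ⟨forall_adj_cons hw.1 ha, haC, hw.2.2⟩

lemma walkCount_le_walkCount_succ [Finite V] (hloop : ∀ i ∈ C, G i i) (l : ℕ) :
    walkCount G C T l ≤ walkCount G C T (l + 1) := by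
  simp only [walkCount_eq_ncard]
  exact Set.ncard_le_ncard_of_injOn (fun w => Fin.cons (w 0) w)
    (fun w hw => cons_mem_walkSet hw hw.2.1 (hloop _ hw.2.1))
    (fun w _ w' _ h => (Fin.cons_inj.mp h).2)

def detour (f : V → V) {l : ℕ} (w : Fin (l + 1) → V) : Fin (l + 3) → V :=
  Fin.cons (w 0) (Fin.cons (f (w 0)) w)

lemma detour_mem_walkSet {f : V → V} (hf : ∀ i ∈ C, G i (f i) ∧ G (f i) i) {l : ℕ}
    {w : Fin (l + 1) → V} (hw : w ∈ walkSet G C T l) :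
    detour f w ∈ walkSet G C T (l + 2) := by
  obtain ⟨hto, hfrom⟩ := hf _ hw.2.1
  exact cons_mem_walkSet (cons_mem_walkSet hw (Set.mem_univ _) hfrom) hw.2.1 hto

lemma detour_eq_detour_iff {f g : V → V} {l : ℕ} {w w' : Fin (l + 1) → V} :
    detour f w = detour g w' ↔ w = w' ∧ f (w 0) = g (w 0) := by
  simp only [detour, Fin.cons_inj]
  constructor
  · rintro ⟨-, hfg, rfl⟩
    exact ⟨rfl, hfg⟩
  · rintro ⟨rfl, hfg⟩
    exact ⟨rfl, hfg, rfl⟩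

lemma detour_injective (f : V → V) (l : ℕ) : Function.Injective (detour f (l := l)) :=
  fun _ _ h => (detour_eq_detour_iff.mp h).1

lemma two_mul_walkCount_le_walkCount_add_two [Finite V] (hsymm : ∀ i j, G i j → G j i)
    (hloop : ∀ i ∈ C, G i i) (hC : ∀ i ∈ C, ∃ j, j ≠ i ∧ G i j) (l : ℕ) :
    2 * walkCount G C T l ≤ walkCount G C T (l + 2) := by
  choose! f hf_ne hf_adj using hC
  have disjoint : Disjoint (detour id '' walkSet G C T l) (detour f '' walkSet G C T l) := by
    refine Set.disjoint_left.mpr ?_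
    rintro _ ⟨w, -, rfl⟩ ⟨w', hw', h⟩
    exact hf_ne _ hw'.2.1 (detour_eq_detour_iff.mp h).2
  simp only [walkCount_eq_ncard]
  calc 2 * (walkSet G C T l).ncard
      = (detour id '' walkSet G C T l ∪ detour f '' walkSet G C T l).ncard := by
        rw [Set.ncard_union_eq disjoint, Set.ncard_image_of_injective _ (detour_injective _ l),
          Set.ncard_image_of_injective _ (detour_injective _ l), two_mul]
    _ ≤ (walkSet G C T (l + 2)).ncard := by
      refine Set.ncard_le_ncard (Set.union_subset ?_ ?_)
      · rintro _ ⟨w, hw, rfl⟩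
        exact detour_mem_walkSet (fun i hi => ⟨hloop i hi, hloop i hi⟩) hw
      · rintro _ ⟨w, hw, rfl⟩
        exact detour_mem_walkSet (fun i hi => ⟨hf_adj i hi, hsymm _ _ (hf_adj i hi)⟩) hw

end Walks

theorem sum_walkCount_le_four_walkCount_general {V : Type*} [Fintype V]
    (G : V → V → Prop) (hsymm : ∀ i j, G i j → G j i) (hloop : ∀ i, G i i)
    (C : Set V) (hC : ∀ i ∈ C, ∃ j, j ≠ i ∧ G i j) (L : ℕ) :
    ∑ l ∈ Finset.Icc 1 L, walkCount G C Set.univ (L - l)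
      ≤ 4 * walkCount G C Set.univ (L - 1) := by
  rw [Finset.sum_Icc_one_sub_eq_sum_range]
  cases L with
  | zero => simp
  | succ n =>
    exact sum_range_succ_le_four_mul_of_monotone
      (monotone_nat_of_le_succ (walkCount_le_walkCount_succ fun i _ => hloop i))
      (two_mul_walkCount_le_walkCount_add_two hsymm (fun i _ => hloop i) hC) n

/-- In an undirected graph with all self-loops, for a set `C` of vertices each
having a neighbor other than itself, `∑_{l=1}^{L} ρ_{L-l}(C, V) ≤ 4 · ρ_{L-1}(C, V)`. -/
theorem sum_walkCount_le_four_walkCount {V : Type*} [Fintype V]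
    (G : V → V → Prop) (hsymm : ∀ i j, G i j → G j i) (hloop : ∀ i, G i i)
    (C : Set V) (hC : ∀ i ∈ C, ∃ j, j ≠ i ∧ G i j) (L : ℕ) (hL : 1 ≤ L) :
    ∑ l ∈ Finset.Icc 1 L, walkCount G C Set.univ (L - l)
      ≤ 4 * walkCount G C Set.univ (L - 1) :=
  sum_walkCount_le_four_walkCount_general G hsymm hloop C hC L
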